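/- For every finite set N of divisions, every assignment partition ((N_k, X_k))_{k=1}^K of N, and every strict priority order ▷ on N, the Two-Stage Serial Dictatorship (T-SD) mechanism respects improvement: whenever ≻' is an improvement for division i with respect to ≻, f^T_i(≻') ⪰_i f^T_i(≻). -/

import Mathlib

open scoped Classical

/-- Each division has a strict linear (total) preference order over workers. -/
def StrictProfile {α : Type*} (pref : α → α → α → Prop) : Prop :=
  ∀ i, IsStrictTotalOrder α (pref i)

/-- `pref'` is an improvement for division `i` with respect to `pref`. -/
def Improvement {α : Type*} (pref pref' : α → α → α → Prop) (i : α) : Prop :=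
  pref' i = pref i ∧
  (∀ j, j ≠ i → ∀ k, k ≠ i → pref j i k → pref' j i k) ∧
  (∀ j, j ≠ i → ∀ k, k ≠ i → ∀ l, l ≠ i → (pref j k l ↔ pref' j k l))

/-- The `r`-maximum element of the finite set `s` (chosen via Hilbert choice):
the element of `s` that `r`-beats every other element of `s`. -/
noncomputable def pick {α : Type*} [Nonempty α] (r : α → α → Prop) (s : Finset α) : α :=
  Classical.epsilon fun m => m ∈ s ∧ ∀ x ∈ s, x ≠ m → r m x

/-- `((Npart k, Xpart k))_k` is an assignment partition: `Npart` partitions the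
divisions, `Xpart` partitions the workers (both identified with `α`), and for each
group `k` we have separation (`Npart k ∩ Xpart k = ∅`) and balance
(`|Npart k| = |Xpart k|`). -/
def IsAPartition {α : Type*} {K : ℕ} (Npart Xpart : Fin K → Finset α) : Prop :=
  (∀ a : α, ∃! k, a ∈ Npart k) ∧
  (∀ a : α, ∃! k, a ∈ Xpart k) ∧
  (∀ k, ∀ a ∈ Npart k, a ∉ Xpart k) ∧
  (∀ k, (Npart k).card = (Xpart k).card)

/-- The choice set `X_{g(i)}` of division `i`: the worker set of `i`'s group. -/
noncomputable def choiceSet {α : Type*} [DecidableEq α] {K : ℕ}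
    (Npart Xpart : Fin K → Finset α) (i : α) : Finset α :=
  Finset.univ.biUnion fun k => if i ∈ Npart k then Xpart k else ∅

/-- An assignment is feasible under the assignment partition if `μ(N_k) = X_k` for all `k`. -/
def FeasibleAP {α : Type*} [DecidableEq α] {K : ℕ}
    (Npart Xpart : Fin K → Finset α) (μ : α → α) : Prop :=
  ∀ k, (Npart k).image μ = Xpart k

/-- Efficiency under the assignment partition: `μ` is feasible and no feasible
assignment `μ'` weakly improves every division and strictly improves some division. -/
def EfficientAP {α : Type*} [DecidableEq α] {K : ℕ}
    (Npart Xpart : Fin K → Finset α) (pref : α → α → α → Prop) (μ : α → α) : Prop :=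
  FeasibleAP Npart Xpart μ ∧
  ¬ ∃ μ' : α → α, Function.Bijective μ' ∧ FeasibleAP Npart Xpart μ' ∧
      (∀ i, μ' i = μ i ∨ pref i (μ' i) (μ i)) ∧ (∃ j, pref j (μ' j) (μ j))

/-- The list of the elements of `s` in decreasing `r`-priority order. -/
noncomputable def orderList {α : Type*} [DecidableEq α] [Nonempty α]
    (r : α → α → Prop) : ℕ → Finset α → List α
  | 0, _ => []
  | fuel + 1, s =>
    if s.Nonempty then pick r s :: orderList r fuel (s.erase (pick r s)) else []

/-- The Two-Stage Serial Dictatorship (T-SD) mechanism.  Stage 1: divisions,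
processed in exogenous `prio`-order, tentatively nominate their most preferred
not-yet-nominated worker from their group's choice set; the sequence of nominated
workers (as divisions, i.e. owners) is the final order.  Stage 2: divisions are
processed in the final order, and each is assigned its most preferred
not-yet-assigned worker from its group's choice set. -/
noncomputable def tsd {α : Type*} [Fintype α] [DecidableEq α] [Nonempty α] {K : ℕ}
    (Npart Xpart : Fin K → Finset α) (prio : α → α → Prop)
    (pref : α → α → α → Prop) : α → α :=
  let divs := orderList prio (Fintype.card α) Finset.univ
  let noms := divs.foldl
    (fun acc i => acc ++ [pick (pref i) (choiceSet Npart Xpart i \ acc.toFinset)]) []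
  (noms.foldl
    (fun (p : Finset α × (α → α)) j =>
      let w := pick (pref j) (choiceSet Npart Xpart j \ p.1)
      (insert w p.1, Function.update p.2 j w))
    (∅, fun a => a)).2

/- ===== Auxiliary development for the proof ===== -/

set_option linter.unusedSectionVars false
set_option linter.unusedVariables false
set_option maxHeartbeats 1000000

section PickLemmas
variable {α : Type*} [Nonempty α] {r r' : α → α → Prop} {s : Finset α}

theorem exists_rmax (hr : IsStrictTotalOrder α r) :
    ∀ (s : Finset α), s.Nonempty → ∃ m, m ∈ s ∧ ∀ x ∈ s, x ≠ m → r m x := by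
  classical
  intro s
  induction s using Finset.induction_on with
  | empty => intro h; exact absurd h (by simp)
  | @insert a s ha ih =>
    intro _
    rcases s.eq_empty_or_nonempty with rfl | hs
    · exact ⟨a, by simp, by simp⟩
    · obtain ⟨m, hm, hmax⟩ := ih hs
      rcases (show r a m ∨ a = m ∨ r m a by
        by_cases h1 : r a m
        · exact Or.inl h1
        by_cases h2 : r m a
        · exact Or.inr (Or.inr h2)
        exact Or.inr (Or.inl (hr.trichotomous a m h1 h2))) with h | h | h
      · refine ⟨a, Finset.mem_insert_self _ _, ?_⟩
        intro x hx hxa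
        rcases Finset.mem_insert.1 hx with rfl | hx
        · exact absurd rfl hxa
        · rcases eq_or_ne x m with rfl | hxm
          · exact h
          · exact (haveI := hr; trans_of r h (hmax x hx hxm))
      · exact absurd (h ▸ hm) ha
      · refine ⟨m, Finset.mem_insert_of_mem hm, ?_⟩
        intro x hx hxm
        rcases Finset.mem_insert.1 hx with rfl | hx
        · exact h
        · exact hmax x hx hxm

theorem pick_spec (hr : IsStrictTotalOrder α r) (hs : s.Nonempty) :
    pick r s ∈ s ∧ ∀ x ∈ s, x ≠ pick r s → r (pick r s) x :=
  Classical.epsilon_spec (exists_rmax hr s hs)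

theorem pick_congr (h : ∀ a ∈ s, ∀ b ∈ s, r a b ↔ r' a b) : pick r s = pick r' s := by
  unfold pick
  congr 1
  funext m
  refine propext ⟨fun ⟨hm, hx⟩ => ⟨hm, fun x hxs hne => (h m hm x hxs).1 (hx x hxs hne)⟩,
    fun ⟨hm, hx⟩ => ⟨hm, fun x hxs hne => (h m hm x hxs).2 (hx x hxs hne)⟩⟩

theorem rasymm (hr : IsStrictTotalOrder α r) {a b : α} (h1 : r a b) (h2 : r b a) : False :=
  by haveI := hr; exact irrefl_of r a (trans_of r h1 h2)

end PickLemmas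

section Defs
variable {α : Type*} [Nonempty α] [DecidableEq α]

noncomputable def nomRec (C : α → Finset α) (pref : α → α → α → Prop) :
    List α → Finset α → List α
  | [], _ => []
  | d :: ds, used =>
    pick (pref d) (C d \ used) :: nomRec C pref ds (insert (pick (pref d) (C d \ used)) used)

noncomputable def aFold (C : α → Finset α) (pref : α → α → α → Prop)
    (l : List α) (A : Finset α) : Finset α :=
  l.foldl (fun A j => insert (pick (pref j) (C j \ A)) A) A

noncomputable def tstep (C : α → Finset α) (pref : α → α → α → Prop)
    (p : Finset α × (α → α)) (j : α) : Finset α × (α → α) :=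
  let w := pick (pref j) (C j \ p.1)
  (insert w p.1, Function.update p.2 j w)

variable {C : α → Finset α} {pref pref' : α → α → α → Prop}

theorem nomRec_nil (used : Finset α) : nomRec C pref [] used = [] := rfl

theorem nomRec_cons (d : α) (ds : List α) (used : Finset α) :
    nomRec C pref (d :: ds) used =
      pick (pref d) (C d \ used) :: nomRec C pref ds (insert (pick (pref d) (C d \ used)) used) :=
  rfl

theorem orderList_spec {r : α → α → Prop} (hr : IsStrictTotalOrder α r) :
    ∀ (fuel : ℕ) (s : Finset α), s.card ≤ fuel →
      (orderList r fuel s).Nodup ∧ (orderList r fuel s).toFinset = s := by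
  intro fuel
  induction fuel with
  | zero =>
    intro s hs
    rw [Finset.card_eq_zero.1 (Nat.le_zero.1 hs)]
    simp [orderList]
  | succ n ih =>
    intro s hs
    rcases s.eq_empty_or_nonempty with rfl | hne
    · simp [orderList]
    · have hm : pick r s ∈ s := (pick_spec hr hne).1
      have hcard : (s.erase (pick r s)).card ≤ n := by
        have := Finset.card_erase_of_mem hm
        omega
      obtain ⟨h1, h2⟩ := ih _ hcard
      rw [orderList, if_pos hne]
      constructor
      · refine List.nodup_cons.2 ⟨fun hmem => ?_, h1⟩
        have : pick r s ∈ (s.erase (pick r s)) := h2 ▸ List.mem_toFinset.2 hmem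
        exact (Finset.mem_erase.1 this).1 rfl
      · rw [List.toFinset_cons, h2, Finset.insert_erase hm]

theorem foldl_nom_eq :
    ∀ (ds : List α) (acc : List α),
      ds.foldl (fun acc d => acc ++ [pick (pref d) (C d \ acc.toFinset)]) acc =
        acc ++ nomRec C pref ds acc.toFinset := by
  intro ds
  induction ds with
  | nil => intro acc; simp [nomRec]
  | cons d ds ih =>
    intro acc
    rw [List.foldl_cons, ih, nomRec]
    have : (acc ++ [pick (pref d) (C d \ acc.toFinset)]).toFinset =
        insert (pick (pref d) (C d \ acc.toFinset)) acc.toFinset := by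
      simp [List.toFinset_append]
    rw [this, List.append_assoc]
    rfl

theorem aFold_nil (A : Finset α) : aFold C pref [] A = A := rfl

theorem aFold_cons (j : α) (l : List α) (A : Finset α) :
    aFold C pref (j :: l) A = aFold C pref l (insert (pick (pref j) (C j \ A)) A) := rfl

theorem aFold_append (l₁ l₂ : List α) (A : Finset α) :
    aFold C pref (l₁ ++ l₂) A = aFold C pref l₂ (aFold C pref l₁ A) :=
  List.foldl_append ..

theorem subset_aFold : ∀ (l : List α) (A : Finset α), A ⊆ aFold C pref l A := by
  intro l
  induction l with
  | nil => intro A; exact Finset.Subset.refl A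
  | cons j l ih =>
    intro A
    exact (Finset.subset_insert _ _).trans (ih _)

theorem aFold_card : ∀ (l : List α) (A : Finset α),
    (aFold C pref l A).card ≤ A.card + l.length := by
  intro l
  induction l with
  | nil => intro A; simp [aFold_nil]
  | cons j l ih =>
    intro A
    rw [aFold_cons]
    calc (aFold C pref l (insert (pick (pref j) (C j \ A)) A)).card
        ≤ (insert (pick (pref j) (C j \ A)) A).card + l.length := ih _
      _ ≤ (A.card + 1) + l.length := by
          exact Nat.add_le_add_right (Finset.card_insert_le _ _) _
      _ = A.card + (j :: l).length := by simp [List.length_cons]; omega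

theorem aFold_congr {X : Finset α} {i : α}
    (hagree : ∀ j, j ≠ i → ∀ a ∈ X, ∀ b ∈ X, pref j a b ↔ pref' j a b) :
    ∀ (l : List α), (∀ j ∈ l, j ≠ i) → ∀ (B : Finset α),
      aFold (fun _ => X) pref l B = aFold (fun _ => X) pref' l B := by
  intro l
  induction l with
  | nil => intro _ B; rfl
  | cons j l ih =>
    intro hl B
    have hj : j ≠ i := hl j List.mem_cons_self
    have hpick : pick (pref j) (X \ B) = pick (pref' j) (X \ B) :=
      pick_congr (fun a ha b hb =>
        hagree j hj a (Finset.mem_sdiff.1 ha).1 b (Finset.mem_sdiff.1 hb).1)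
    rw [aFold_cons, aFold_cons, hpick, ih (fun x hx => hl x (List.mem_cons_of_mem _ hx))]

theorem foldl_fst : ∀ (l : List α) (p : Finset α × (α → α)),
    (l.foldl (tstep C pref) p).1 = aFold C pref l p.1 := by
  intro l
  induction l with
  | nil => intro p; rfl
  | cons j l ih => intro p; rw [List.foldl_cons, ih, aFold_cons]; rfl

theorem foldl_snd_notmem {i : α} : ∀ (l : List α), i ∉ l → ∀ (p : Finset α × (α → α)),
    (l.foldl (tstep C pref) p).2 i = p.2 i := by
  intro l
  induction l with
  | nil => intro _ p; rfl
  | cons j l ih =>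
    intro hi p
    have hij : i ≠ j := fun h => hi (h ▸ List.mem_cons_self)
    rw [List.foldl_cons, ih (fun h => hi (List.mem_cons_of_mem _ h))]
    exact Function.update_of_ne hij _ _

theorem stage2_result {i : α} {P T : List α} (hiT : i ∉ T) :
    ((P ++ i :: T).foldl (tstep C pref) (∅, fun a => a)).2 i =
      pick (pref i) (C i \ aFold C pref P ∅) := by
  rw [List.foldl_append, List.foldl_cons, foldl_snd_notmem _ hiT]
  show (Function.update _ i _) i = _
  rw [Function.update_self, foldl_fst]

end Defs

section Part
variable {α : Type*} [Nonempty α] [DecidableEq α] {K : ℕ}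
variable {Npart Xpart : Fin K → Finset α}
variable {pref pref' : α → α → α → Prop}

theorem choiceSet_eq (hpart : IsAPartition Npart Xpart) {j : α} {k : Fin K}
    (hj : j ∈ Npart k) : choiceSet Npart Xpart j = Xpart k := by
  ext a
  simp only [choiceSet, Finset.mem_biUnion, Finset.mem_univ, true_and]
  constructor
  · rintro ⟨k', hk'⟩
    by_cases h : j ∈ Npart k'
    · rw [if_pos h] at hk'
      rwa [(hpart.1 j).unique h hj] at hk'
    · rw [if_neg h] at hk'
      exact absurd hk' (Finset.notMem_empty a)
  · intro ha
    exact ⟨k, by rwa [if_pos hj]⟩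

theorem Xdisj (hpart : IsAPartition Npart Xpart) {a : α} {k k' : Fin K}
    (h : a ∈ Xpart k) (h' : a ∈ Xpart k') : k = k' :=
  ((hpart.2.1 a).unique h h')

theorem Ndisj (hpart : IsAPartition Npart Xpart) {a : α} {k k' : Fin K}
    (h : a ∈ Npart k) (h' : a ∈ Npart k') : k = k' :=
  ((hpart.1 a).unique h h')

/-- The counting invariant. -/
def Hc (Npart Xpart : Fin K → Finset α) (used : Finset α) (ds : List α) : Prop :=
  ∀ k, (used ∩ Xpart k).card + (ds.filter (· ∈ Npart k)).length ≤ (Xpart k).card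

theorem hc_avail (hpart : IsAPartition Npart Xpart) {used : Finset α} {d : α} {ds : List α}
    {m : Fin K} (hH : Hc Npart Xpart used (d :: ds)) (hd : d ∈ Npart m) :
    (Xpart m \ used).Nonempty := by
  have h := hH m
  rw [List.filter_cons, if_pos (by simpa using hd)] at h
  simp only [List.length_cons] at h
  have hlt : (used ∩ Xpart m).card < (Xpart m).card := by omega
  rw [Finset.sdiff_nonempty]
  intro hsub
  have : used ∩ Xpart m = Xpart m := by
    apply Finset.Subset.antisymm (Finset.inter_subset_right)
    exact Finset.subset_inter hsub (Finset.Subset.refl _)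
  rw [this] at hlt
  omega

theorem hc_step (hpart : IsAPartition Npart Xpart) {used : Finset α} {d w : α} {ds : List α}
    {m : Fin K} (hH : Hc Npart Xpart used (d :: ds)) (hd : d ∈ Npart m)
    (hw : w ∈ Xpart m \ used) : Hc Npart Xpart (insert w used) ds := by
  intro k
  obtain ⟨hwX, hwu⟩ := Finset.mem_sdiff.1 hw
  by_cases hk : k = m
  · subst hk
    have h := hH k
    rw [List.filter_cons, if_pos (by simpa using hd)] at h
    simp only [List.length_cons] at h
    rw [Finset.insert_inter_of_mem hwX, Finset.card_insert_of_notMem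
      (fun hmem => hwu (Finset.mem_inter.1 hmem).1)]
    omega
  · have h := hH k
    have hdN : d ∉ Npart k := fun hdk => hk (Ndisj hpart hdk hd)
    rw [List.filter_cons, if_neg (by simpa using hdN)] at h
    have hwX' : w ∉ Xpart k := fun hwk => hk (Xdisj hpart hwk hwX)
    rw [Finset.insert_inter_of_notMem hwX']
    exact h

theorem nomRec_valid (hpart : IsAPartition Npart Xpart) (hpref : StrictProfile pref) :
    ∀ (ds : List α) (used : Finset α), Hc Npart Xpart used ds →
      (nomRec (choiceSet Npart Xpart) pref ds used).Nodup ∧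
      (∀ x ∈ nomRec (choiceSet Npart Xpart) pref ds used, x ∉ used) ∧
      (nomRec (choiceSet Npart Xpart) pref ds used).length = ds.length := by
  intro ds
  induction ds with
  | nil => intro used _; simp [nomRec_nil]
  | cons d ds ih =>
    intro used hH
    obtain ⟨m, hd⟩ := (hpart.1 d).exists
    have hCd : choiceSet Npart Xpart d = Xpart m := choiceSet_eq hpart hd
    have hav : (Xpart m \ used).Nonempty := hc_avail hpart hH hd
    set w := pick (pref d) (choiceSet Npart Xpart d \ used) with hw
    have hwmem : w ∈ Xpart m \ used := by
      rw [hw, hCd]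
      exact (pick_spec (hpref d) hav).1
    obtain ⟨h1, h2, h3⟩ := ih (insert w used) (hc_step hpart hH hd hwmem)
    rw [nomRec_cons]
    refine ⟨List.nodup_cons.2 ⟨fun hmem => ?_, h1⟩, ?_, by rw [← hw]; simp [h3]⟩
    · exact (h2 w hmem) (Finset.mem_insert_self _ _)
    · intro x hx
      rcases List.mem_cons.1 hx with rfl | hx
      · exact (Finset.mem_sdiff.1 hwmem).2
      · exact fun hxu => (h2 x hx) (Finset.mem_insert_of_mem hxu)

theorem nomRec_cmp {i : α} (hpref : StrictProfile pref) (hpref' : StrictProfile pref')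
    (himp : Improvement pref pref' i) :
    ∀ (ds : List α) (used : Finset α),
      nomRec (choiceSet Npart Xpart) pref' ds used =
        nomRec (choiceSet Npart Xpart) pref ds used ∨
      ∃ P w T T', nomRec (choiceSet Npart Xpart) pref ds used = P ++ w :: T ∧
        nomRec (choiceSet Npart Xpart) pref' ds used = P ++ i :: T' ∧
        w ≠ i ∧ i ∉ P ∧ i ∉ used := by
  intro ds
  induction ds with
  | nil => intro used; left; rw [nomRec_nil, nomRec_nil]
  | cons d ds ih =>
    intro used
    set C := choiceSet Npart Xpart with hC
    set A := C d \ used with hA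
    set w0 := pick (pref d) A with hw0
    set w0' := pick (pref' d) A with hw0'
    rw [nomRec_cons, nomRec_cons]
    by_cases h : w0' = w0
    · rw [← hw0, ← hw0', h]
      rcases ih (insert w0 used) with heq | ⟨P, w, T, T', h1, h2, h3, h4, h5⟩
      · left; rw [heq]
      · right
        refine ⟨w0 :: P, w, T, T', by rw [h1]; rfl, by rw [h2]; rfl, h3, ?_, ?_⟩
        · intro hmem
          rcases List.mem_cons.1 hmem with rfl | hmem
          · exact h5 (Finset.mem_insert_self _ _)
          · exact h4 hmem
        · exact fun hu => h5 (Finset.mem_insert_of_mem hu)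
    · have hAne : A.Nonempty := by
        rcases A.eq_empty_or_nonempty with hAe | hne
        · refine absurd (pick_congr (r := pref' d) (r' := pref d) ?_) h
          rw [hAe]; simp
        · exact hne
      obtain ⟨hw0A, hw0max⟩ := pick_spec (hpref d) hAne
      obtain ⟨hw0'A, hw0'max⟩ := pick_spec (hpref' d) hAne
      rw [← hw0] at hw0A hw0max
      rw [← hw0'] at hw0'A hw0'max
      have hdi : d ≠ i := by
        rintro rfl
        exact h (by rw [hw0', hw0, himp.1])
      have hw0'i : w0' = i := by
        by_contra hne
        rcases eq_or_ne w0 i with hw0i | hw0i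
        · have h1 : pref d w0 w0' := hw0max w0' hw0'A h
          have h2 : pref' d w0 w0' := by
            rw [hw0i] at h1 ⊢
            exact himp.2.1 d hdi w0' hne h1
          exact rasymm (hpref' d) h2 (hw0'max w0 hw0A (fun he => h he.symm))
        · have h1 : pref d w0 w0' := hw0max w0' hw0'A h
          have h2 : pref' d w0' w0 := hw0'max w0 hw0A (fun he => h he.symm)
          have h3 : pref d w0' w0 := (himp.2.2 d hdi w0' hne w0 hw0i).2 h2
          exact rasymm (hpref d) h1 h3
      right
      refine ⟨[], w0, nomRec C pref ds (insert w0 used), nomRec C pref' ds (insert i used),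
        rfl, ?_, fun he => h (hw0'i.trans he.symm), by simp, ?_⟩
      · show w0' :: nomRec C pref' ds (insert w0' used) =
          [] ++ i :: nomRec C pref' ds (insert i used)
        rw [hw0'i]
        rfl
      · have hiA : i ∈ A := hw0'i ▸ hw0'A
        exact (Finset.mem_sdiff.1 hiA).2

theorem aFold_inter (hpart : IsAPartition Npart Xpart) (hpref : StrictProfile pref)
    (k1 : Fin K) :
    ∀ (l : List α) (A : Finset α), Hc Npart Xpart A l →
      aFold (choiceSet Npart Xpart) pref l A ∩ Xpart k1 =
        aFold (fun _ => Xpart k1) pref (l.filter (· ∈ Npart k1)) (A ∩ Xpart k1) := by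
  intro l
  induction l with
  | nil => intro A _; rw [aFold_nil]; simp [aFold_nil]
  | cons j l ih =>
    intro A hH
    obtain ⟨m, hj⟩ := (hpart.1 j).exists
    have hCj : choiceSet Npart Xpart j = Xpart m := choiceSet_eq hpart hj
    have hav : (Xpart m \ A).Nonempty := hc_avail hpart hH hj
    set w := pick (pref j) (choiceSet Npart Xpart j \ A) with hwdef
    have hwmem : w ∈ Xpart m \ A := by
      rw [hwdef, hCj]
      exact (pick_spec (hpref j) hav).1
    have hH' : Hc Npart Xpart (insert w A) l := hc_step hpart hH hj hwmem
    rw [aFold_cons, ih _ hH']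
    by_cases hm : m = k1
    · subst hm
      have hfil : (j :: l).filter (· ∈ Npart m) = j :: l.filter (· ∈ Npart m) := by
        rw [List.filter_cons, if_pos (by simpa using hj)]
      rw [hfil, aFold_cons]
      congr 1
      have hsd : Xpart m \ (A ∩ Xpart m) = Xpart m \ A := by
        ext a; simp only [Finset.mem_sdiff, Finset.mem_inter]; tauto
      have : pick (pref j) (Xpart m \ (A ∩ Xpart m)) = w := by
        rw [hsd, hwdef, hCj]
      rw [this, Finset.insert_inter_of_mem (Finset.mem_sdiff.1 hwmem).1]
    · have hjN : j ∉ Npart k1 := fun hjk => hm (Ndisj hpart hj hjk)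
      have hfil : (j :: l).filter (· ∈ Npart k1) = l.filter (· ∈ Npart k1) := by
        rw [List.filter_cons, if_neg (by simpa using hjN)]
      have hwX : w ∉ Xpart k1 := fun hwk =>
        hm (Xdisj hpart (Finset.mem_sdiff.1 hwmem).1 hwk)
      rw [hfil, Finset.insert_inter_of_notMem hwX]

theorem filter_length_eq [Fintype α] (l : List α) (hnd : l.Nodup)
    (hto : l.toFinset = Finset.univ) (s : Finset α) :
    (l.filter (· ∈ s)).length = s.card := by
  have h1 : (l.filter (· ∈ s)).Nodup := hnd.filter _
  rw [← List.toFinset_card_of_nodup h1, List.toFinset_filter, hto]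
  congr 1
  ext a
  simp

theorem tsd_eq [Fintype α] (prio : α → α → Prop) (pref : α → α → α → Prop) :
    tsd Npart Xpart prio pref =
      ((nomRec (choiceSet Npart Xpart) pref (orderList prio (Fintype.card α) Finset.univ) ∅).foldl
        (tstep (choiceSet Npart Xpart) pref) (∅, fun a => a)).2 := by
  rw [show tsd Npart Xpart prio pref =
    (((orderList prio (Fintype.card α) Finset.univ).foldl
      (fun acc d => acc ++ [pick (pref d) (choiceSet Npart Xpart d \ acc.toFinset)]) []).foldl
      (tstep (choiceSet Npart Xpart) pref) (∅, fun a => a)).2 from rfl]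
  rw [foldl_nom_eq]
  simp only [List.nil_append, List.toFinset_nil]

end Part

/-- Two-Stage Serial Dictatorship respects improvement: whenever `pref'` is an
improvement for division `i` with respect to `pref`, division `i` weakly prefers
its T-SD assignment under `pref'` to its T-SD assignment under `pref`. -/
theorem tsd_respects_improvement {α : Type*} [Fintype α] [DecidableEq α] [Nonempty α]
    {K : ℕ} (Npart Xpart : Fin K → Finset α)
    (hpart : IsAPartition Npart Xpart)
    (prio : α → α → Prop) (hprio : IsStrictTotalOrder α prio)
    (pref pref' : α → α → α → Prop)
    (hpref : StrictProfile pref) (hpref' : StrictProfile pref')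
    (i : α) (himp : Improvement pref pref' i) :
    tsd Npart Xpart prio pref' i = tsd Npart Xpart prio pref i ∨
    pref i (tsd Npart Xpart prio pref' i) (tsd Npart Xpart prio pref i) := by
  classical
  obtain ⟨k1, hik1⟩ := (hpart.1 i).exists
  have hiX : i ∉ Xpart k1 := hpart.2.2.1 k1 i hik1
  set divs := orderList prio (Fintype.card α) Finset.univ with hdivs
  obtain ⟨hdnd, hdto⟩ :=
    orderList_spec hprio (Fintype.card α) Finset.univ (le_of_eq Finset.card_univ)
  have hdlen : divs.length = Fintype.card α := by
    rw [← List.toFinset_card_of_nodup hdnd, hdto, Finset.card_univ]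
  have hHc0 : Hc Npart Xpart ∅ divs := by
    intro k
    have h1 : ((∅ : Finset α) ∩ Xpart k).card = 0 := by simp
    have h2 := filter_length_eq divs hdnd hdto (Npart k)
    have h3 := hpart.2.2.2 k
    omega
  set L := nomRec (choiceSet Npart Xpart) pref divs ∅ with hLdef
  set L' := nomRec (choiceSet Npart Xpart) pref' divs ∅ with hL'def
  obtain ⟨hLnd, -, hLlen⟩ := nomRec_valid hpart hpref divs ∅ hHc0
  obtain ⟨hL'nd, -, hL'len⟩ := nomRec_valid hpart hpref' divs ∅ hHc0
  rw [← hLdef] at hLnd hLlen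
  rw [← hL'def] at hL'nd hL'len
  have hLto : L.toFinset = Finset.univ :=
    Finset.eq_univ_of_card _ (by rw [List.toFinset_card_of_nodup hLnd, hLlen, hdlen])
  have hL'to : L'.toFinset = Finset.univ :=
    Finset.eq_univ_of_card _ (by rw [List.toFinset_card_of_nodup hL'nd, hL'len, hdlen])
  have hiL : i ∈ L := by rw [← List.mem_toFinset, hLto]; exact Finset.mem_univ i
  -- Decompose both runs around i.
  have hdec : ∃ (preL postL preL' postL' rest : List α),
      L = preL ++ i :: postL ∧ i ∉ postL ∧
      L' = preL' ++ i :: postL' ∧ i ∉ postL' ∧ (∀ j ∈ preL', j ≠ i) ∧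
      preL.filter (· ∈ Npart k1) = preL'.filter (· ∈ Npart k1) ++ rest := by
    rcases nomRec_cmp hpref hpref' himp divs ∅ with heq | ⟨P, w, T, T', h1, h2, h3, h4, -⟩
    · rw [← hLdef] at heq
      rw [← hL'def] at heq
      obtain ⟨P, T, hPT⟩ := List.append_of_mem hiL
      have hnd2 := hLnd
      rw [hPT] at hnd2
      obtain ⟨hPnd, hiTnd, hdisj⟩ := List.nodup_append.1 hnd2
      have hiT : i ∉ T := (List.nodup_cons.1 hiTnd).1
      have hiP : i ∉ P := fun hp => hdisj i hp i List.mem_cons_self rfl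
      exact ⟨P, T, P, T, [], hPT, hiT, by rw [heq, hPT], hiT,
        fun j hj he => hiP (he ▸ hj), by simp⟩
    · rw [← hLdef] at h1
      rw [← hL'def] at h2
      have hiT : i ∈ T := by
        have hmem := hiL
        rw [h1] at hmem
        rcases List.mem_append.1 hmem with h | h
        · exact absurd h h4
        · rcases List.mem_cons.1 h with h | h
          · exact absurd h.symm h3
          · exact h
      obtain ⟨T1, T2, hT⟩ := List.append_of_mem hiT
      have hnd2 := hLnd
      rw [h1, hT] at hnd2
      have hnd3 : (T1 ++ i :: T2).Nodup :=
        (List.nodup_cons.1 (List.nodup_append.1 hnd2).2.1).2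
      obtain ⟨hT1nd, hiT2nd, hdisjT⟩ := List.nodup_append.1 hnd3
      have hiT2 : i ∉ T2 := (List.nodup_cons.1 hiT2nd).1
      have hiT1 : i ∉ T1 := fun hp => hdisjT i hp i List.mem_cons_self rfl
      have hnd4 := hL'nd
      rw [h2] at hnd4
      have hiT' : i ∉ T' := (List.nodup_cons.1 (List.nodup_append.1 hnd4).2.1).1
      refine ⟨P ++ w :: T1, T2, P, T', (w :: T1).filter (· ∈ Npart k1), ?_, hiT2, h2, hiT', ?_, ?_⟩
      · rw [h1, hT]
        simp [List.append_assoc]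
      · intro j hj he
        exact h4 (he ▸ hj)
      · rw [List.filter_append]
  obtain ⟨preL, postL, preL', postL', rest, hdL, hipostL, hdL', hipostL', hpreL'ne, hfil⟩ := hdec
  -- counting for prefixes of a full run
  have hHcpre : ∀ (M preM postM : List α), M.Nodup → M.toFinset = Finset.univ →
      M = preM ++ i :: postM → Hc Npart Xpart ∅ preM := by
    intro M preM postM hnd hto hdecomp k
    have h0 : ((∅ : Finset α) ∩ Xpart k).card = 0 := by simp
    have h3 : (M.filter (· ∈ Npart k)).length = (Npart k).card :=
      filter_length_eq M hnd hto (Npart k)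
    have h5 : (preM.filter (· ∈ Npart k)).length ≤ (M.filter (· ∈ Npart k)).length := by
      rw [hdecomp, List.filter_append, List.length_append]
      omega
    have h4 := hpart.2.2.2 k
    omega
  have hCi : choiceSet Npart Xpart i = Xpart k1 := choiceSet_eq hpart hik1
  -- the two stage-2 outcomes
  have hres : tsd Npart Xpart prio pref i =
      pick (pref i) (Xpart k1 \
        aFold (fun _ => Xpart k1) pref (preL.filter (· ∈ Npart k1)) ∅) := by
    rw [tsd_eq, ← hdivs, ← hLdef, hdL, stage2_result hipostL, hCi]
    congr 1
    have hinter := aFold_inter hpart hpref k1 preL ∅ (hHcpre L preL postL hLnd hLto hdL)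
    rw [Finset.empty_inter] at hinter
    calc Xpart k1 \ aFold (choiceSet Npart Xpart) pref preL ∅
        = Xpart k1 \ (aFold (choiceSet Npart Xpart) pref preL ∅ ∩ Xpart k1) := by
          ext a; simp only [Finset.mem_sdiff, Finset.mem_inter]; tauto
      _ = _ := by rw [hinter]
  have hagree : ∀ j, j ≠ i → ∀ a ∈ Xpart k1, ∀ b ∈ Xpart k1, pref j a b ↔ pref' j a b :=
    fun j hj a ha b hb =>
      himp.2.2 j hj a (fun he => hiX (he ▸ ha)) b (fun he => hiX (he ▸ hb))
  have hres' : tsd Npart Xpart prio pref' i =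
      pick (pref i) (Xpart k1 \
        aFold (fun _ => Xpart k1) pref (preL'.filter (· ∈ Npart k1)) ∅) := by
    rw [tsd_eq, ← hdivs, ← hL'def, hdL', stage2_result hipostL', hCi, himp.1]
    congr 1
    have hinter := aFold_inter hpart hpref' k1 preL' ∅ (hHcpre L' preL' postL' hL'nd hL'to hdL')
    rw [Finset.empty_inter] at hinter
    have hswap : aFold (fun _ => Xpart k1) pref' (preL'.filter (· ∈ Npart k1)) ∅ =
        aFold (fun _ => Xpart k1) pref (preL'.filter (· ∈ Npart k1)) ∅ :=
      (aFold_congr hagree (preL'.filter (· ∈ Npart k1))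
        (fun j hj => hpreL'ne j (List.mem_filter.1 hj).1) ∅).symm
    calc Xpart k1 \ aFold (choiceSet Npart Xpart) pref' preL' ∅
        = Xpart k1 \ (aFold (choiceSet Npart Xpart) pref' preL' ∅ ∩ Xpart k1) := by
          ext a; simp only [Finset.mem_sdiff, Finset.mem_inter]; tauto
      _ = _ := by rw [hinter, hswap]
  set S := aFold (fun _ => Xpart k1) pref (preL.filter (· ∈ Npart k1)) ∅ with hSdef
  set S' := aFold (fun _ => Xpart k1) pref (preL'.filter (· ∈ Npart k1)) ∅ with hS'def
  have hsub : S' ⊆ S := by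
    rw [hSdef, hfil, aFold_append]
    exact subset_aFold _ _
  have hcard : S.card < (Xpart k1).card := by
    have h1 : S.card ≤ (preL.filter (· ∈ Npart k1)).length := by
      have := aFold_card (C := fun _ => Xpart k1) (pref := pref)
        (preL.filter (· ∈ Npart k1)) ∅
      simpa using this
    have h2 : (preL.filter (· ∈ Npart k1)).length + 1 ≤ (L.filter (· ∈ Npart k1)).length := by
      rw [hdL, List.filter_append, List.filter_cons, if_pos (by simpa using hik1),
        List.length_append, List.length_cons]
      omega
    have h3 : (L.filter (· ∈ Npart k1)).length = (Npart k1).card :=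
      filter_length_eq L hLnd hLto (Npart k1)
    have h4 := hpart.2.2.2 k1
    omega
  have hne : (Xpart k1 \ S).Nonempty := by
    rw [Finset.sdiff_nonempty]
    intro hsubX
    exact absurd (Finset.card_le_card hsubX) (by omega)
  have hne' : (Xpart k1 \ S').Nonempty :=
    hne.mono (Finset.sdiff_subset_sdiff (Finset.Subset.refl _) hsub)
  obtain ⟨hxmem, -⟩ := pick_spec (hpref i) hne
  obtain ⟨hymem, hymax⟩ := pick_spec (hpref i) hne'
  rw [hres, hres']
  rcases eq_or_ne (pick (pref i) (Xpart k1 \ S')) (pick (pref i) (Xpart k1 \ S)) with he | hne2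
  · left; exact he
  · right
    exact hymax _ (Finset.sdiff_subset_sdiff (Finset.Subset.refl _) hsub hxmem)
      (fun h => hne2 h.symm)
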